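/- Let G be an abelian group (written additively) and S a finite subset of G with S = −S, 0 ∉ S, and S generating G. Then for every edge xy of the Cayley graph H = Cayley(G,S), the Ricci curvature satisfies κ(x,y) ≥ 0; indeed, for every α ∈ [0,1], W(m_x^α, m_y^α) ≤ 1, so κ_α(x,y) ≥ 0. -/

import Mathlib

open Filter Topology Classical

noncomputable section

namespace RicciFlatPaper

variable {V : Type*}

/-- Degree as the natural cardinality of the neighbor set. -/
def deg (G : SimpleGraph V) (x : V) : ℕ := (G.neighborSet x).ncard

/-- The probability measure `m_x^α`: mass `α` at `x`, mass `(1-α)/d_x` at each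
neighbor of `x`, and `0` elsewhere. -/
def mass (G : SimpleGraph V) (α : ℝ) (x : V) : V → ℝ :=
  fun v => if v = x then α else if G.Adj x v then (1 - α) / (deg G x) else 0

/-- `A` is a (finitely supported, nonnegative) coupling between `m₁` and `m₂`. -/
def IsCoupling (m₁ m₂ : V → ℝ) (A : V → V → ℝ) : Prop :=
  (∀ u v, 0 ≤ A u v) ∧
  (Function.support (fun p : V × V => A p.1 p.2)).Finite ∧
  (∀ u, ∑ᶠ v, A u v = m₁ u) ∧ (∀ v, ∑ᶠ u, A u v = m₂ v)

/-- The transportation (Wasserstein) distance between two distributions,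
with respect to the graph distance of `G`. -/
def W (G : SimpleGraph V) (m₁ m₂ : V → ℝ) : ℝ :=
  sInf {c | ∃ A : V → V → ℝ, IsCoupling m₁ m₂ A ∧
    c = ∑ᶠ p : V × V, A p.1 p.2 * (G.dist p.1 p.2 : ℝ)}

/-- `κ_α(x,y) = 1 - W(m_x^α, m_y^α)`. -/
def kappaAlpha (G : SimpleGraph V) (α : ℝ) (x y : V) : ℝ :=
  1 - W G (mass G α x) (mass G α y)

/-- Lin–Lu–Yau Ricci curvature `κ(x,y) = lim_{α→1} κ_α(x,y)/(1-α)`. -/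
def ricci (G : SimpleGraph V) (x y : V) : ℝ :=
  limUnder (𝓝[<] (1 : ℝ)) (fun α => kappaAlpha G α x y / (1 - α))

/-- A graph is Ricci-flat if the Ricci curvature vanishes on every edge. -/
def RicciFlat (G : SimpleGraph V) : Prop := ∀ x y : V, G.Adj x y → ricci G x y = 0

/-- The edge `xy` lies on a cycle of length `n`. -/
def EdgeInCycleOfLength (G : SimpleGraph V) (x y : V) (n : ℕ) : Prop :=
  ∃ (v : V) (c : G.Walk v v), c.IsCycle ∧ c.length = n ∧ s(x, y) ∈ c.edges

/-- The Cayley graph of an additive group `G` with connection set `S`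
(assumed to satisfy `S = -S` and `0 ∉ S`): `x` and `y` are adjacent iff
`y - x ∈ S`. -/
def cayley (G : Type*) [AddGroup G] (S : Set G) : SimpleGraph G :=
  SimpleGraph.fromRel (fun x y => y - x ∈ S)

section AuxCayley

variable {G : Type*} [AddCommGroup G] {S : Set G}

lemma cayley_adj (hsymm : -S = S) (h0 : (0:G) ∉ S) {u v : G} :
    (cayley G S).Adj u v ↔ v - u ∈ S := by
  simp only [cayley, SimpleGraph.fromRel_adj]
  constructor
  · rintro ⟨hne, h | h⟩
    · exact h
    · rw [← hsymm]; simpa using h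
  · intro h
    refine ⟨fun he => h0 (by simpa [he] using h), Or.inl h⟩

lemma cayley_neighborSet (hsymm : -S = S) (h0 : (0:G) ∉ S) (x : G) :
    (cayley G S).neighborSet x = (fun s => x + s) '' S := by
  ext u
  simp only [SimpleGraph.mem_neighborSet, cayley_adj hsymm h0, Set.mem_image]
  constructor
  · intro h; exact ⟨u - x, h, by abel⟩
  · rintro ⟨s, hs, rfl⟩; simpa using hs

lemma cayley_deg (hsymm : -S = S) (h0 : (0:G) ∉ S) (x : G) :
    deg (cayley G S) x = S.ncard := by
  rw [deg, cayley_neighborSet hsymm h0,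
    Set.ncard_image_of_injective _ (add_right_injective x)]


/-- Translation as a graph homomorphism of the Cayley graph. -/
def transHom (S : Set G) (t : G) : cayley G S →g cayley G S where
  toFun := fun u => u + t
  map_rel' := by
    intro a b hab
    simp only [cayley, SimpleGraph.fromRel_adj] at hab ⊢
    obtain ⟨hne, h⟩ := hab
    have e1 : b + t - (a + t) = b - a := by abel
    have e2 : a + t - (b + t) = a - b := by abel
    exact ⟨by simpa using hne, by rwa [e1, e2]⟩

lemma cayley_connected (hsymm : -S = S) (h0 : (0:G) ∉ S)
    (hgen : AddSubgroup.closure S = ⊤) : (cayley G S).Connected := by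
  have key : ∀ g : G, (cayley G S).Reachable 0 g := by
    intro g
    have hg : g ∈ AddSubgroup.closure S := by rw [hgen]; trivial
    induction hg using AddSubgroup.closure_induction with
    | mem s hs =>
        exact ((cayley_adj hsymm h0).2 (by simpa using hs)).reachable
    | zero => exact SimpleGraph.Reachable.refl 0
    | add a b _ _ ha hb =>
        refine ha.trans ?_
        have h1 : (cayley G S).Reachable (0 + a) (b + a) := hb.map (transHom S a)
        simpa [add_comm] using h1
    | neg a _ ha =>
        have h1 : (cayley G S).Reachable (0 + -a) (a + -a) := ha.map (transHom S (-a))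
        simpa using h1.symm
  constructor
  · intro u v
    exact (key u).symm.trans (key v)

/-- The neighbors of `x` in the Cayley graph, as a `Finset`. -/
def nbr (hfin : S.Finite) (x : G) : Finset G := hfin.toFinset.image (fun s => x + s)

lemma mem_nbr (hfin : S.Finite) (hsymm : -S = S) (h0 : (0:G) ∉ S) {x u : G} :
    u ∈ nbr hfin x ↔ (cayley G S).Adj x u := by
  simp only [nbr, Finset.mem_image, Set.Finite.mem_toFinset, cayley_adj hsymm h0]
  constructor
  · rintro ⟨s, hs, rfl⟩; simpa using hs
  · intro h; exact ⟨u - x, h, by abel⟩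

lemma not_mem_nbr_self (hfin : S.Finite) (hsymm : -S = S) (h0 : (0:G) ∉ S) (x : G) :
    x ∉ nbr hfin x := by
  rw [mem_nbr hfin hsymm h0]
  exact (cayley G S).irrefl

lemma card_nbr (hfin : S.Finite) (x : G) : (nbr hfin x).card = S.ncard := by
  rw [nbr, Finset.card_image_of_injective _ (add_right_injective x),
    Set.ncard_eq_toFinset_card _ hfin]

lemma mass_support (hfin : S.Finite) (hsymm : -S = S) (h0 : (0:G) ∉ S) (α : ℝ) (x : G)
    (g : G → ℝ) :
    Function.support (fun u => mass (cayley G S) α x u * g u) ⊆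
      ↑(insert x (nbr hfin x)) := by
  intro u hu
  simp only [Function.mem_support, mass] at hu
  by_cases h1 : u = x
  · simp [h1]
  · by_cases h2 : (cayley G S).Adj x u
    · simp [Finset.mem_insert, (mem_nbr hfin hsymm h0).2 h2]
    · simp [h1, h2] at hu

/-- The key computation: a finsum against the mass distribution. -/
lemma finsum_mass_mul (hfin : S.Finite) (hsymm : -S = S) (h0 : (0:G) ∉ S) (α : ℝ) (x : G)
    (g : G → ℝ) :
    ∑ᶠ u, mass (cayley G S) α x u * g u =
      α * g x + ∑ u ∈ nbr hfin x, ((1 - α) / S.ncard) * g u := by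
  rw [finsum_eq_sum_of_support_subset _ (mass_support hfin hsymm h0 α x g),
    Finset.sum_insert (not_mem_nbr_self hfin hsymm h0 x)]
  congr 1
  · simp [mass]
  · apply Finset.sum_congr rfl
    intro u hu
    have hadj : (cayley G S).Adj x u := (mem_nbr hfin hsymm h0).1 hu
    have hne : u ≠ x := fun he => (cayley G S).irrefl (he ▸ hadj)
    simp [mass, hne, hadj, cayley_deg hsymm h0]


lemma mass_nonneg (hsymm : -S = S) (h0 : (0:G) ∉ S) {α : ℝ} (hα : α ∈ Set.Icc (0:ℝ) 1)
    (x u : G) : 0 ≤ mass (cayley G S) α x u := by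
  obtain ⟨h1, h2⟩ := hα
  unfold mass
  split_ifs with hh1 hh2
  · exact h1
  · exact div_nonneg (by linarith) (Nat.cast_nonneg _)
  · exact le_refl _
  
lemma cayley_dist_add (hsymm : -S = S) (h0 : (0:G) ∉ S) {s : G} (hs : s ∈ S) (u : G) :
    (cayley G S).dist u (u + s) = 1 := by
  rw [SimpleGraph.dist_eq_one_iff_adj, cayley_adj hsymm h0]
  simpa using hs

lemma mass_translate (hsymm : -S = S) (h0 : (0:G) ∉ S) (α : ℝ) (x t v : G) :
    mass (cayley G S) α x (v - t) = mass (cayley G S) α (x + t) v := by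
  have h1 : v - t = x ↔ v = x + t := by
    constructor
    · intro h; rw [← h]; abel
    · intro h; rw [h]; abel
  have h2 : (cayley G S).Adj x (v - t) ↔ (cayley G S).Adj (x + t) v := by
    rw [cayley_adj hsymm h0, cayley_adj hsymm h0]
    have : v - t - x = v - (x + t) := by abel
    rw [this]
  unfold mass
  rw [cayley_deg hsymm h0, cayley_deg hsymm h0]
  by_cases hc1 : v = x + t
  · simp [hc1, h1.2 hc1]
  · rw [if_neg (fun hh => hc1 (h1.1 hh)), if_neg hc1]
    by_cases hc2 : (cayley G S).Adj (x + t) v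
    · rw [if_pos (h2.2 hc2), if_pos hc2]
    · rw [if_neg (fun hh => hc2 (h2.1 hh)), if_neg hc2]

/-- The translation coupling between `m_x^α` and `m_y^α`, with cost exactly 1. -/
lemma translation_coupling (hfin : S.Finite) (hsymm : -S = S) (h0 : (0:G) ∉ S)
    {x y : G} (hxy : (cayley G S).Adj x y) {α : ℝ} (hα : α ∈ Set.Icc (0:ℝ) 1) :
    ∃ A : G → G → ℝ, IsCoupling (mass (cayley G S) α x) (mass (cayley G S) α y) A ∧
      ∑ᶠ p : G × G, A p.1 p.2 * ((cayley G S).dist p.1 p.2 : ℝ) = 1 := by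
  set H := cayley G S
  set s₀ := y - x with hs₀def
  have hs₀ : s₀ ∈ S := (cayley_adj hsymm h0).1 hxy
  have hyx : y = x + s₀ := by rw [hs₀def]; abel
  set A : G → G → ℝ := fun u v => if v = u + s₀ then mass H α x u else 0 with hA
  have hSne : S.Nonempty := ⟨s₀, hs₀⟩
  have hNpos : 0 < (S.ncard : ℝ) := by
    exact_mod_cast (Set.ncard_pos hfin).2 hSne
  refine ⟨A, ⟨?_, ?_, ?_, ?_⟩, ?_⟩
  · intro u v
    rw [hA]
    dsimp only
    split_ifs
    · exact mass_nonneg hsymm h0 hα x u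
    · exact le_refl _
  · apply Set.Finite.subset
      (((insert x (nbr hfin x) : Finset G) : Set G).toFinite.image (fun u => (u, u + s₀)))
    rintro ⟨u, v⟩ hp
    simp only [Function.mem_support, hA] at hp
    by_cases hv : v = u + s₀
    · subst hv
      refine ⟨u, ?_, rfl⟩
      have hm : mass H α x u ≠ 0 := by simpa [hA] using hp
      have : u ∈ (↑(insert x (nbr hfin x)) : Set G) :=
        mass_support hfin hsymm h0 α x 1 (by simp [Function.mem_support, hm]; exact hm)
      simpa using this
    · simp [hv] at hp
  · intro u
    rw [show mass H α x u = A u (u + s₀) by simp [hA]]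
    apply finsum_eq_single
    intro v hv
    simp [hA, hv]
  · intro v
    have : A (v - s₀) v = mass H α y v := by
      have e : v = v - s₀ + s₀ := by abel
      rw [hA]
      dsimp only
      rw [if_pos e, mass_translate hsymm h0 α x s₀ v, ← hyx]
    rw [← this]
    apply finsum_eq_single
    intro u hu
    have : v ≠ u + s₀ := by
      intro hh
      exact hu (by rw [hh]; abel)
    simp [hA, this]
  · set T : Finset (G × G) := (insert x (nbr hfin x)).image (fun u => (u, u + s₀)) with hT
    have hsupp : Function.support (fun p : G × G => A p.1 p.2 * (H.dist p.1 p.2 : ℝ)) ⊆ ↑T := by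
      rintro ⟨u, v⟩ hp
      simp only [Function.mem_support] at hp
      have hAuv : A u v ≠ 0 := fun hh => hp (by rw [hh]; ring)
      by_cases hv : v = u + s₀
      · subst hv
        have hm : mass H α x u ≠ 0 := by simpa [hA] using hAuv
        have hu : u ∈ insert x (nbr hfin x) := by
          have : u ∈ (↑(insert x (nbr hfin x)) : Set G) :=
            mass_support hfin hsymm h0 α x 1 (by simp [Function.mem_support, hm]; exact hm)
          simpa using this
        simp only [hT, Finset.coe_image]
        exact ⟨u, by simpa using hu, rfl⟩
      · exact absurd (by simp [hA, hv]) hAuv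
    rw [finsum_eq_sum_of_support_subset _ hsupp, hT,
      Finset.sum_image (by intro a _ b _ hab; exact (Prod.mk.injEq _ _ _ _ ▸ hab).1)]
    have : ∀ u ∈ insert x (nbr hfin x),
        A u (u + s₀) * (H.dist u (u + s₀) : ℝ) = mass H α x u := by
      intro u _
      rw [cayley_dist_add hsymm h0 hs₀ u]
      simp [hA]
    rw [Finset.sum_congr rfl this, Finset.sum_insert (not_mem_nbr_self hfin hsymm h0 x)]
    have hx : mass H α x x = α := by simp [mass]
    have hn : ∀ u ∈ nbr hfin x, mass H α x u = (1 - α) / S.ncard := by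
      intro u hu
      have hadj : H.Adj x u := (mem_nbr hfin hsymm h0).1 hu
      have hne : u ≠ x := fun he => H.irrefl (he ▸ hadj)
      have hd : deg H x = S.ncard := cayley_deg hsymm h0 x
      simp [mass, hne, hadj, hd]
    rw [hx, Finset.sum_congr rfl hn, Finset.sum_const, card_nbr hfin x, nsmul_eq_mul]
    field_simp
    ring

/-- Easy direction of Kantorovich duality: any 1-Lipschitz `f` lower-bounds the
cost of any coupling. Stated for a general graph `H` on vertex type `G`. -/
lemma cost_ge_of_lipschitz {H : SimpleGraph G} {m1 m2 : G → ℝ} {A : G → G → ℝ}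
    (hA : IsCoupling m1 m2 A) (f : G → ℝ)
    (hf : ∀ u v : G, f u - f v ≤ (H.dist u v : ℝ)) :
    (∑ᶠ u, f u * m1 u) - (∑ᶠ u, f u * m2 u) ≤
      ∑ᶠ p : G × G, A p.1 p.2 * (H.dist p.1 p.2 : ℝ) := by
  obtain ⟨hpos, hfinsupp, hm1, hm2⟩ := hA
  set T : Finset (G × G) := hfinsupp.toFinset with hT
  set P : Finset G := T.image Prod.fst with hP
  set Q : Finset G := T.image Prod.snd with hQ
  have memT : ∀ {u v : G}, A u v ≠ 0 → (u, v) ∈ T := by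
    intro u v h
    simp [hT, Function.mem_support, h]
  -- row sums
  have hrow : ∀ u : G, m1 u = ∑ v ∈ Q, A u v := by
    intro u
    rw [← hm1 u]
    apply finsum_eq_sum_of_support_subset
    intro v hv
    exact Finset.mem_coe.2 (Finset.mem_image.2 ⟨(u, v), memT hv, rfl⟩)
  have hcol : ∀ v : G, m2 v = ∑ u ∈ P, A u v := by
    intro v
    rw [← hm2 v]
    apply finsum_eq_sum_of_support_subset
    intro u hu
    exact Finset.mem_coe.2 (Finset.mem_image.2 ⟨(u, v), memT hu, rfl⟩)
  have h1 : ∑ᶠ u, f u * m1 u = ∑ u ∈ P, ∑ v ∈ Q, f u * A u v := by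
    rw [finsum_eq_sum_of_support_subset (s := P)]
    · exact Finset.sum_congr rfl fun u _ => by rw [hrow u, Finset.mul_sum]
    · intro u hu
      have hm : m1 u ≠ 0 := fun hh => by simp [hh] at hu
      have : ∃ v, A u v ≠ 0 := by
        by_contra hc
        push_neg at hc
        exact hm (by rw [← hm1 u]; simp [hc])
      obtain ⟨v, hv⟩ := this
      exact Finset.mem_coe.2 (Finset.mem_image.2 ⟨(u, v), memT hv, rfl⟩)
  have h2 : ∑ᶠ v, f v * m2 v = ∑ u ∈ P, ∑ v ∈ Q, f v * A u v := by
    rw [finsum_eq_sum_of_support_subset (s := Q)]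
    · rw [Finset.sum_comm]
      exact Finset.sum_congr rfl fun v _ => by rw [hcol v, Finset.mul_sum]
    · intro v hv
      have hm : m2 v ≠ 0 := fun hh => by simp [hh] at hv
      have : ∃ u, A u v ≠ 0 := by
        by_contra hc
        push_neg at hc
        exact hm (by rw [← hm2 v]; simp [hc])
      obtain ⟨u, hu⟩ := this
      exact Finset.mem_coe.2 (Finset.mem_image.2 ⟨(u, v), memT hu, rfl⟩)
  have h3 : ∑ᶠ p : G × G, A p.1 p.2 * (H.dist p.1 p.2 : ℝ) =
      ∑ u ∈ P, ∑ v ∈ Q, A u v * (H.dist u v : ℝ) := by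
    rw [← Finset.sum_product', finsum_eq_sum_of_support_subset (s := P ×ˢ Q)]
    intro p hp
    have hp' : A p.1 p.2 ≠ 0 := fun hh => by simp [hh] at hp
    refine Finset.mem_coe.2 (Finset.mem_product.2 ⟨?_, ?_⟩)
    · exact Finset.mem_image.2 ⟨p, memT hp', rfl⟩
    · exact Finset.mem_image.2 ⟨p, memT hp', rfl⟩
  rw [h1, h2, h3, ← Finset.sum_sub_distrib]
  apply Finset.sum_le_sum
  intro u _
  rw [← Finset.sum_sub_distrib]
  apply Finset.sum_le_sum
  intro v _
  have : f u * A u v - f v * A u v = (f u - f v) * A u v := by ring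
  rw [this, mul_comm (A u v)]
  exact mul_le_mul_of_nonneg_right (hf u v) (hpos u v)

/-- The set of coupling costs whose infimum defines `W`. -/
def costSet (H : SimpleGraph G) (m1 m2 : G → ℝ) : Set ℝ :=
  {c | ∃ A : G → G → ℝ, IsCoupling m1 m2 A ∧
    c = ∑ᶠ p : G × G, A p.1 p.2 * (H.dist p.1 p.2 : ℝ)}

lemma W_eq_sInf_costSet (H : SimpleGraph G) (m1 m2 : G → ℝ) :
    W H m1 m2 = sInf (costSet H m1 m2) := rfl

lemma costSet_bddBelow (H : SimpleGraph G) (m1 m2 : G → ℝ) :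
    BddBelow (costSet H m1 m2) := by
  refine ⟨0, fun c hc => ?_⟩
  obtain ⟨A, hA, rfl⟩ := hc
  exact finsum_nonneg fun p => mul_nonneg (hA.1 p.1 p.2) (Nat.cast_nonneg _)

lemma W_le_one (hfin : S.Finite) (hsymm : -S = S) (h0 : (0:G) ∉ S)
    {x y : G} (hxy : (cayley G S).Adj x y) {α : ℝ} (hα : α ∈ Set.Icc (0:ℝ) 1) :
    W (cayley G S) (mass (cayley G S) α x) (mass (cayley G S) α y) ≤ 1 := by
  obtain ⟨A, hA, hcost⟩ := translation_coupling hfin hsymm h0 hxy hα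
  exact csInf_le (costSet_bddBelow _ _ _) ⟨A, hA, hcost.symm⟩

lemma costSet_nonempty (hfin : S.Finite) (hsymm : -S = S) (h0 : (0:G) ∉ S)
    {x y : G} (hxy : (cayley G S).Adj x y) {α : ℝ} (hα : α ∈ Set.Icc (0:ℝ) 1) :
    (costSet (cayley G S) (mass (cayley G S) α x) (mass (cayley G S) α y)).Nonempty := by
  obtain ⟨A, hA, hcost⟩ := translation_coupling hfin hsymm h0 hxy hα
  exact ⟨_, A, hA, hcost.symm⟩

/-- Lower bound `W ≥ 2α - 1` via the 1-Lipschitz function `u ↦ -d(u,x)`. -/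
lemma W_ge (hfin : S.Finite) (hsymm : -S = S) (h0 : (0:G) ∉ S)
    (hgen : AddSubgroup.closure S = ⊤)
    {x y : G} (hxy : (cayley G S).Adj x y) {α : ℝ} (hα : α ∈ Set.Icc (0:ℝ) 1) :
    2 * α - 1 ≤ W (cayley G S) (mass (cayley G S) α x) (mass (cayley G S) α y) := by
  set H := cayley G S
  have hconn : H.Connected := cayley_connected hsymm h0 hgen
  set f : G → ℝ := fun u => -(H.dist u x : ℝ) with hf
  have hlip : ∀ u v : G, f u - f v ≤ (H.dist u v : ℝ) := by
    intro u v
    rw [hf]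
    dsimp only
    have := hconn.dist_triangle (u := v) (v := u) (w := x)
    have h2 : H.dist v u = H.dist u v := SimpleGraph.dist_comm
    push_cast
    have : (H.dist v x : ℝ) ≤ H.dist v u + H.dist u x := by exact_mod_cast this
    rw [h2] at this
    linarith
  have hNpos : 0 < (S.ncard : ℝ) := by
    exact_mod_cast (Set.ncard_pos hfin).2 ⟨y - x, (cayley_adj hsymm h0).1 hxy⟩
  obtain ⟨h0α, hα1⟩ := hα
  -- value against m_x^α
  have e1 : ∑ᶠ u, f u * mass H α x u = -(1 - α) := by
    have : ∑ᶠ u, f u * mass H α x u = ∑ᶠ u, mass H α x u * f u :=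
      finsum_congr fun u => mul_comm _ _
    rw [this, finsum_mass_mul hfin hsymm h0]
    have hfx : f x = 0 := by simp [hf]
    have hfn : ∀ u ∈ nbr hfin x, f u = -1 := by
      intro u hu
      have hadj : H.Adj x u := (mem_nbr hfin hsymm h0).1 hu
      have : H.dist u x = 1 := by
        rw [SimpleGraph.dist_eq_one_iff_adj]
        exact hadj.symm
      simp [hf, this]
    rw [hfx, Finset.sum_congr rfl (fun u hu => by rw [hfn u hu]), Finset.sum_const,
      card_nbr hfin x, nsmul_eq_mul]
    field_simp
    ring
  -- value against m_y^α
  have e2 : ∑ᶠ u, f u * mass H α y u ≤ -α := by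
    have : ∑ᶠ u, f u * mass H α y u = ∑ᶠ u, mass H α y u * f u :=
      finsum_congr fun u => mul_comm _ _
    rw [this, finsum_mass_mul hfin hsymm h0]
    have hfy : f y = -1 := by
      have : H.dist y x = 1 := by
        rw [SimpleGraph.dist_eq_one_iff_adj]
        exact hxy.symm
      simp [hf, this]
    have hsum : ∑ u ∈ nbr hfin y, ((1 - α) / S.ncard) * f u ≤ 0 := by
      apply Finset.sum_nonpos
      intro u _
      apply mul_nonpos_of_nonneg_of_nonpos
      · exact div_nonneg (by linarith) (Nat.cast_nonneg _)
      · simp [hf]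
    rw [hfy]
    nlinarith
  refine le_csInf (costSet_nonempty hfin hsymm h0 hxy ⟨h0α, hα1⟩) ?_
  rintro c ⟨A, hA, rfl⟩
  have := cost_ge_of_lipschitz hA f hlip
  rw [e1] at this
  linarith

lemma coupling_slice_finite {m1 m2 : G → ℝ} {A : G → G → ℝ} (hA : IsCoupling m1 m2 A)
    (u : G) : (Function.support (fun v => A u v)).Finite := by
  apply Set.Finite.subset (hA.2.1.image Prod.snd)
  intro v hv
  exact ⟨(u, v), hv, rfl⟩

/-- The delta coupling between `m_x^1` and `m_y^1`. -/
lemma delta_coupling (hsymm : -S = S) (h0 : (0:G) ∉ S) {x y : G}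
    (hxy : (cayley G S).Adj x y) :
    IsCoupling (mass (cayley G S) 1 x) (mass (cayley G S) 1 y)
      (fun u v => if u = x ∧ v = y then (1:ℝ) else 0) ∧
    ∑ᶠ p : G × G, (if p.1 = x ∧ p.2 = y then (1:ℝ) else 0) *
      ((cayley G S).dist p.1 p.2 : ℝ) = 1 := by
  set H := cayley G S
  have hmass1 : ∀ z u : G, mass H 1 z u = if u = z then (1:ℝ) else 0 := by
    intro z u
    unfold mass
    split_ifs with h1 h2 <;> simp
  constructor
  · refine ⟨?_, ?_, ?_, ?_⟩
    · intro u v; dsimp only; split_ifs <;> norm_num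
    · apply Set.Finite.subset (Set.finite_singleton (x, y))
      rintro ⟨u, v⟩ hp
      simp only [Function.mem_support] at hp
      by_cases h : u = x ∧ v = y
      · simp [h.1, h.2]
      · simp [h] at hp
    · intro u
      rw [hmass1]
      by_cases hu : u = x
      · have : ∀ v : G, v ≠ y → (if u = x ∧ v = y then (1:ℝ) else 0) = 0 := by
          intro v hv; simp [hv]
        rw [finsum_eq_single _ y this]
        simp [hu]
      · have : ∀ v : G, (if u = x ∧ v = y then (1:ℝ) else 0) = 0 := by
          intro v; simp [hu]
        rw [finsum_congr this, finsum_zero, if_neg hu]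
    · intro v
      rw [hmass1]
      by_cases hv : v = y
      · have : ∀ u : G, u ≠ x → (if u = x ∧ v = y then (1:ℝ) else 0) = 0 := by
          intro u hu; simp [hu]
        rw [finsum_eq_single _ x this]
        simp [hv]
      · have : ∀ u : G, (if u = x ∧ v = y then (1:ℝ) else 0) = 0 := by
          intro u; simp [hv]
        rw [finsum_congr this, finsum_zero, if_neg hv]
  · have hd : H.dist x y = 1 := SimpleGraph.dist_eq_one_iff_adj.2 hxy
    have : ∀ p : G × G, p ≠ (x, y) →
        (if p.1 = x ∧ p.2 = y then (1:ℝ) else 0) * (H.dist p.1 p.2 : ℝ) = 0 := by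
      rintro ⟨u, v⟩ hp
      have : ¬(u = x ∧ v = y) := by
        rintro ⟨rfl, rfl⟩; exact hp rfl
      simp [this]
    rw [finsum_eq_single _ (x, y) this]
    simp [hd]

lemma coupling_slice_finite' {m1 m2 : G → ℝ} {A : G → G → ℝ} (hA : IsCoupling m1 m2 A)
    (v : G) : (Function.support (fun u => A u v)).Finite := by
  apply Set.Finite.subset (hA.2.1.image Prod.fst)
  intro u hu
  exact ⟨(u, v), hu, rfl⟩

lemma mass_comb (hsymm : -S = S) (h0 : (0:G) ∉ S) {α β : ℝ} (hα : α < 1)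
    (z u : G) :
    mass (cayley G S) β z u = ((1-β)/(1-α)) * mass (cayley G S) α z u
      + (1 - (1-β)/(1-α)) * mass (cayley G S) 1 z u := by
  have hne : (1:ℝ) - α ≠ 0 := by linarith
  unfold mass
  by_cases h1 : u = z
  · rw [if_pos h1, if_pos h1, if_pos h1]
    field_simp
    ring
  · rw [if_neg h1, if_neg h1, if_neg h1]
    by_cases h2 : (cayley G S).Adj z u
    · rw [if_pos h2, if_pos h2, if_pos h2]
      field_simp
      ring
    · rw [if_neg h2, if_neg h2, if_neg h2]
      ring

/-- Mixing a coupling for `α` with the delta coupling gives the key convexity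
inequality `W_β ≤ t W_α + (1-t)` with `t = (1-β)/(1-α)`. -/
lemma W_mix (hfin : S.Finite) (hsymm : -S = S) (h0 : (0:G) ∉ S)
    {x y : G} (hxy : (cayley G S).Adj x y) {α β : ℝ}
    (hα0 : 0 ≤ α) (hαβ : α ≤ β) (hβ1 : β < 1) :
    W (cayley G S) (mass (cayley G S) β x) (mass (cayley G S) β y) ≤
      ((1-β)/(1-α)) * W (cayley G S) (mass (cayley G S) α x) (mass (cayley G S) α y)
        + (1 - (1-β)/(1-α)) := by
  set H := cayley G S
  have hα1 : α < 1 := lt_of_le_of_lt hαβ hβ1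
  have hne : (0:ℝ) < 1 - α := by linarith
  set t : ℝ := (1-β)/(1-α) with htdef
  have ht0 : 0 < t := div_pos (by linarith) hne
  have ht1 : t ≤ 1 := by
    rw [htdef, div_le_one hne]
    linarith
  obtain ⟨hD, hDcost⟩ := delta_coupling hsymm h0 hxy
  set D : G → G → ℝ := fun u v => if u = x ∧ v = y then (1:ℝ) else 0 with hDdef
  -- step 1: every cost c for α yields cost t*c + (1-t) for β
  have key : ∀ c ∈ costSet H (mass H α x) (mass H α y),
      W H (mass H β x) (mass H β y) ≤ t * c + (1 - t) := by
    rintro c ⟨A, hA, rfl⟩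
    set C : G → G → ℝ := fun u v => t * A u v + (1 - t) * D u v with hCdef
    have hDslice : ∀ u : G, (Function.support (fun v => D u v)).Finite := fun u =>
      coupling_slice_finite hD u
    have hDslice' : ∀ v : G, (Function.support (fun u => D u v)).Finite := fun v =>
      coupling_slice_finite' hD v
    have hCcoup : IsCoupling (mass H β x) (mass H β y) C := by
      refine ⟨?_, ?_, ?_, ?_⟩
      · intro u v
        exact add_nonneg (mul_nonneg ht0.le (hA.1 u v))
          (mul_nonneg (by linarith) (hD.1 u v))
      · apply Set.Finite.subset (hA.2.1.union hD.2.1)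
        rintro ⟨u, v⟩ hp
        simp only [Function.mem_support, hCdef] at hp
        by_cases h1 : A u v = 0
        · by_cases h2 : D u v = 0
          · exact absurd (by rw [h1, h2]; ring) hp
          · exact Or.inr h2
        · exact Or.inl h1
      · intro u
        have e : ∑ᶠ v, C u v = ∑ᶠ v, t * A u v + ∑ᶠ v, (1 - t) * D u v := by
          apply finsum_add_distrib
          · apply Set.Finite.subset (coupling_slice_finite hA u)
            intro v hv
            simp only [Function.mem_support] at hv ⊢
            intro hz; exact hv (by rw [hz]; ring)
          · apply Set.Finite.subset (hDslice u)
            intro v hv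
            simp only [Function.mem_support] at hv ⊢
            intro hz; exact hv (by rw [hz]; ring)
        rw [e, ← mul_finsum _ _,
          ← mul_finsum _ _, hA.2.2.1 u, hD.2.2.1 u,
          mass_comb (α := α) (β := β) hsymm h0 hα1 x u]
      · intro v
        have e : ∑ᶠ u, C u v = ∑ᶠ u, t * A u v + ∑ᶠ u, (1 - t) * D u v := by
          apply finsum_add_distrib
          · apply Set.Finite.subset (coupling_slice_finite' hA v)
            intro u hu
            simp only [Function.mem_support] at hu ⊢
            intro hz; exact hu (by rw [hz]; ring)
          · apply Set.Finite.subset (hDslice' v)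
            intro u hu
            simp only [Function.mem_support] at hu ⊢
            intro hz; exact hu (by rw [hz]; ring)
        rw [e, ← mul_finsum _ _,
          ← mul_finsum _ _, hA.2.2.2 v, hD.2.2.2 v,
          mass_comb (α := α) (β := β) hsymm h0 hα1 y v]
    have hcost : ∑ᶠ p : G × G, C p.1 p.2 * (H.dist p.1 p.2 : ℝ) =
        t * (∑ᶠ p : G × G, A p.1 p.2 * (H.dist p.1 p.2 : ℝ)) + (1 - t) := by
      have hAfin : (Function.support
          (fun p : G × G => t * (A p.1 p.2 * (H.dist p.1 p.2 : ℝ)))).Finite := by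
        apply Set.Finite.subset hA.2.1
        rintro p hp
        simp only [Function.mem_support] at hp ⊢
        intro hz; exact hp (by rw [hz]; ring)
      have hDfin : (Function.support
          (fun p : G × G => (1 - t) * (D p.1 p.2 * (H.dist p.1 p.2 : ℝ)))).Finite := by
        apply Set.Finite.subset hD.2.1
        rintro p hp
        simp only [Function.mem_support] at hp ⊢
        intro hz; exact hp (by rw [hz]; ring)
      have e : ∀ p : G × G, C p.1 p.2 * (H.dist p.1 p.2 : ℝ) =
          t * (A p.1 p.2 * (H.dist p.1 p.2 : ℝ))
            + (1 - t) * (D p.1 p.2 * (H.dist p.1 p.2 : ℝ)) := by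
        intro p; rw [hCdef]; ring
      rw [finsum_congr e, finsum_add_distrib hAfin hDfin,
        ← mul_finsum _ _,
        ← mul_finsum _ _, hDcost, mul_one]
    calc W H (mass H β x) (mass H β y)
        ≤ ∑ᶠ p : G × G, C p.1 p.2 * (H.dist p.1 p.2 : ℝ) :=
          csInf_le (costSet_bddBelow _ _ _) ⟨C, hCcoup, rfl⟩
      _ = t * (∑ᶠ p : G × G, A p.1 p.2 * (H.dist p.1 p.2 : ℝ)) + (1 - t) := hcost
  -- step 2: take infimum over c
  have h2 : (W H (mass H β x) (mass H β y) - (1 - t)) / t ≤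
      W H (mass H α x) (mass H α y) := by
    apply le_csInf (costSet_nonempty hfin hsymm h0 hxy ⟨hα0, hα1.le⟩)
    intro c hc
    rw [div_le_iff₀ ht0]
    have := key c hc
    nlinarith [key c hc]
  rw [div_le_iff₀ ht0] at h2
  nlinarith

end AuxCayley

theorem ricci_nonneg_cayley'
    {G : Type*} [AddCommGroup G]
    (S : Set G) (hfin : S.Finite) (hsymm : -S = S) (h0 : (0 : G) ∉ S)
    (hgen : AddSubgroup.closure S = ⊤)
    {x y : G} (hxy : (cayley G S).Adj x y) :
    0 ≤ ricci (cayley G S) x y ∧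
    ∀ α ∈ Set.Icc (0 : ℝ) 1,
      W (cayley G S) (mass (cayley G S) α x) (mass (cayley G S) α y) ≤ 1 ∧
      0 ≤ kappaAlpha (cayley G S) α x y := by
  set H := cayley G S with hH
  have part2 : ∀ α ∈ Set.Icc (0 : ℝ) 1,
      W H (mass H α x) (mass H α y) ≤ 1 ∧ 0 ≤ kappaAlpha H α x y := by
    intro α hα
    have h1 := W_le_one hfin hsymm h0 hxy hα
    exact ⟨h1, by unfold kappaAlpha; linarith⟩
  refine ⟨?_, part2⟩
  set F : ℝ → ℝ := fun α => kappaAlpha H α x y / (1 - α) with hF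
  have hmono : MonotoneOn F (Set.Ioo (0:ℝ) 1) := by
    rintro α ⟨hα0, hα1⟩ β ⟨hβ0, hβ1⟩ hαβ
    have hmix := W_mix hfin hsymm h0 hxy hα0.le hαβ hβ1
    rw [hF]
    dsimp only
    unfold kappaAlpha
    rw [div_le_div_iff₀ (by linarith) (by linarith)]
    have e : (1-β)/(1-α) * (1-α) = 1-β :=
      div_mul_cancel₀ _ (by linarith : (1:ℝ) - α ≠ 0)
    have h' := mul_le_mul_of_nonneg_right hmix (by linarith : (0:ℝ) ≤ 1 - α)
    rw [← hH] at h'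
    have e2 : (1-β)/(1-α) * (1-α) * W H (mass H α x) (mass H α y)
        = (1-β) * W H (mass H α x) (mass H α y) := by rw [e]
    nlinarith [h', e, e2]
  have hbdd : BddAbove (F '' Set.Ioo (0:ℝ) 1) := by
    refine ⟨2, ?_⟩
    rintro c ⟨α, ⟨hα0, hα1⟩, rfl⟩
    have hge := W_ge hfin hsymm h0 hgen hxy ⟨hα0.le, hα1.le⟩
    rw [hF]
    dsimp only
    unfold kappaAlpha
    rw [div_le_iff₀ (by linarith)]
    linarith
  have hne : (Set.Ioo (0:ℝ) 1).Nonempty := ⟨1/2, by norm_num⟩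
  have htend : Tendsto F (𝓝[<] (1:ℝ)) (𝓝 (sSup (F '' Set.Ioo (0:ℝ) 1))) :=
    MonotoneOn.tendsto_nhdsWithin_Ioo_left hne hmono hbdd
  have hricci : ricci H x y = sSup (F '' Set.Ioo (0:ℝ) 1) := by
    unfold ricci
    exact htend.limUnder_eq
  rw [hricci]
  have hmem : F (1/2) ∈ F '' Set.Ioo (0:ℝ) 1 := ⟨1/2, by norm_num, rfl⟩
  have hF12 : 0 ≤ F (1/2) := by
    have := (part2 (1/2) (by norm_num)).2
    rw [hF]
    dsimp only
    apply div_nonneg this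
    norm_num
  exact le_trans hF12 (le_csSup hbdd hmem)

/-- For a Cayley graph of an abelian group with a finite
symmetric generating set, every edge has nonnegative Ricci curvature; indeed
`W(m_x^α, m_y^α) ≤ 1` and `κ_α(x,y) ≥ 0` for every `α ∈ [0,1]`. -/
theorem ricci_nonneg_cayley
    {G : Type*} [AddCommGroup G]
    (S : Set G) (hfin : S.Finite) (hsymm : -S = S) (h0 : (0 : G) ∉ S)
    (hgen : AddSubgroup.closure S = ⊤)
    {x y : G} (hxy : (cayley G S).Adj x y) :
    0 ≤ ricci (cayley G S) x y ∧
    ∀ α ∈ Set.Icc (0 : ℝ) 1,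
      W (cayley G S) (mass (cayley G S) α x) (mass (cayley G S) α y) ≤ 1 ∧
      0 ≤ kappaAlpha (cayley G S) α x y :=
  ricci_nonneg_cayley' S hfin hsymm h0 hgen hxy

end RicciFlatPaper

end
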